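/- arXiv:2307.07357 — 3 statements merged into one kernel-verified Lean document; each statement's English description precedes it below -/
import Mathlib

section
/- (Proposition 1: equivalence of the tailored loss and the Augmented Suboptimality Loss.) Let p be a positive integer, let X be a finite nonempty set of vectors in ℝ^p all of whose components belong to {0, 1}, let θ ∈ ℝ^p, let h : ℝ^p → ℝ, and let x̂ ∈ ℝ^p have all components in {0, 1}. Then the Augmented Suboptimality Loss with affine hypothesis and ℓ1-distance, ⟨θ, x̂⟩ + h(x̂) - min_{x ∈ X} (⟨θ, x⟩ + h(x) - ‖x̂ - x‖₁), is equal to the tailored loss ℓ_θ(x̂) = ⟨θ, x̂⟩ + h(x̂) - min_{x ∈ X} (⟨θ + 2x̂ - 𝟙, x⟩ + h(x) - ⟨𝟙, x̂⟩). -/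
/-! On binary vectors the ℓ1-distance is affine in each argument:
`|a - b| = a + b - 2ab` for `a, b ∈ {0, 1}`. Substituting this into the augmented
suboptimality loss turns each objective into the tailored one, term by term. -/

open Finset

theorem abs_sub_eq_add_sub_two_mul_of_binary {α : Type*} [CommRing α] [LinearOrder α]
    [IsOrderedRing α] {a b : α} (ha : a = 0 ∨ a = 1) (hb : b = 0 ∨ b = 1) :
    |a - b| = a + b - 2 * a * b := by
  rcases ha with rfl | rfl <;> rcases hb with rfl | rfl <;> norm_num

theorem sum_abs_sub_eq_of_binary {ι : Type*} [Fintype ι] (y x : ι → ℝ)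
    (hy : ∀ i, y i = 0 ∨ y i = 1) (hx : ∀ i, x i = 0 ∨ x i = 1) :
    ∑ i, |y i - x i| = ∑ i, y i + ∑ i, x i - ∑ i, 2 * y i * x i := by
  simp only [abs_sub_eq_add_sub_two_mul_of_binary (hy _) (hx _), sum_sub_distrib,
    sum_add_distrib]

theorem ASL_eq_tailored_loss_general (p : ℕ)
    (X : Finset (Fin p → ℝ)) (hX : X.Nonempty)
    (hXbin : ∀ x ∈ X, ∀ i, x i = 0 ∨ x i = 1)
    (θ : Fin p → ℝ) (h : (Fin p → ℝ) → ℝ)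
    (xh : Fin p → ℝ) (hxh : ∀ i, xh i = 0 ∨ xh i = 1) :
    (∑ i, θ i * xh i) + h xh
      - X.inf' hX (fun x => (∑ i, θ i * x i) + h x - ∑ i, |xh i - x i|)
    = (∑ i, θ i * xh i) + h xh
      - X.inf' hX (fun x =>
          (∑ i, (θ i + 2 * xh i - 1) * x i) + h x - ∑ i, 1 * xh i) := by
  congr 1
  refine inf'_congr hX rfl fun x hx => ?_
  rw [sum_abs_sub_eq_of_binary xh x hxh (hXbin x hx)]
  simp only [add_sub_assoc, sub_mul, add_mul, one_mul, sum_sub_distrib, sum_add_distrib]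
  ring

/-- Proposition 1: the Augmented Suboptimality Loss with affine hypothesis and
ℓ1-distance equals the tailored loss of the paper. -/
theorem ASL_eq_tailored_loss (p : ℕ) (hp : 0 < p)
    (X : Finset (Fin p → ℝ)) (hX : X.Nonempty)
    (hXbin : ∀ x ∈ X, ∀ i, x i = 0 ∨ x i = 1)
    (θ : Fin p → ℝ) (h : (Fin p → ℝ) → ℝ)
    (xh : Fin p → ℝ) (hxh : ∀ i, xh i = 0 ∨ xh i = 1) :
    (∑ i, θ i * xh i) + h xh
      - X.inf' hX (fun x => (∑ i, θ i * x i) + h x - ∑ i, |xh i - x i|)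
    = (∑ i, θ i * xh i) + h xh
      - X.inf' hX (fun x =>
          (∑ i, (θ i + 2 * xh i - 1) * x i) + h x - ∑ i, 1 * xh i) :=
  ASL_eq_tailored_loss_general p X hX hXbin θ h xh hxh
end

section
/- Let p be a positive integer, let X be a finite nonempty set of vectors in ℝ^p all of whose components belong to {0, 1}, let θ ∈ ℝ^p, let h : ℝ^p → ℝ, and assume x̂ ∈ X. Then the tailored loss vanishes, ℓ_θ(x̂) = 0, if and only if x̂ is an optimizer of the augmented forward problem, i.e., x̂ ∈ argmin_{x ∈ X} (⟨θ + 2x̂ - 𝟙, x⟩ + h(x)). -/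
/-- The tailored loss vanishes iff `x̂` is an optimizer of the augmented
forward optimization problem (A-FOP). -/
theorem tailored_loss_eq_zero_iff (p : ℕ) (hp : 0 < p)
    (X : Finset (Fin p → ℝ)) (hX : X.Nonempty)
    (hXbin : ∀ x ∈ X, ∀ i, x i = 0 ∨ x i = 1)
    (θ : Fin p → ℝ) (h : (Fin p → ℝ) → ℝ)
    (xh : Fin p → ℝ) (hxhX : xh ∈ X) :
    (∑ i, θ i * xh i) + h xh
      - X.inf' hX (fun x =>
          (∑ i, (θ i + 2 * xh i - 1) * x i) + h x - ∑ i, 1 * xh i) = 0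
    ↔ ∀ y ∈ X,
        (∑ i, (θ i + 2 * xh i - 1) * xh i) + h xh
          ≤ (∑ i, (θ i + 2 * xh i - 1) * y i) + h y := by
  set g : (Fin p → ℝ) → ℝ := fun x =>
    (∑ i, (θ i + 2 * xh i - 1) * x i) + h x - ∑ i, 1 * xh i with hg
  have hbin := hXbin xh hxhX
  have key : (∑ i, (θ i + 2 * xh i - 1) * xh i)
      = (∑ i, θ i * xh i) + ∑ i, 1 * xh i := by
    rw [← Finset.sum_add_distrib]
    refine Finset.sum_congr rfl fun i _ => ?_
    rcases hbin i with h0 | h0 <;> rw [h0] <;> ring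
  have hle : X.inf' hX g ≤ g xh := Finset.inf'_le g hxhX
  have hgxh : g xh = (∑ i, θ i * xh i) + h xh := by
    simp only [hg]; linarith [key]
  constructor
  · intro heq y hy
    have hy' : X.inf' hX g ≤ g y := Finset.inf'_le g hy
    simp only [hg] at hy'
    linarith [key]
  · intro hall
    have h2 : (∑ i, θ i * xh i) + h xh ≤ X.inf' hX g := by
      apply Finset.le_inf'
      intro y hy
      have := hall y hy
      simp only [hg]
      linarith [key]
    linarith
end

section
/- Let p be a positive integer, let X be a finite nonempty set of vectors in ℝ^p all of whose components belong to {0, 1}, let θ ∈ ℝ^p, let h : ℝ^p → ℝ, and let x̂ ∈ ℝ^p have all components in {0, 1}. Suppose x* ∈ X attains the minimum of x ↦ ⟨θ + 2x̂ - 𝟙, x⟩ + h(x) over X. Then g = x̂ - x* is a subgradient of the tailored loss at θ: for every θ' ∈ ℝ^p, ℓ_{θ'}(x̂) ≥ ℓ_θ(x̂) + ⟨x̂ - x*, θ' - θ⟩. -/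
/-- If `x*` minimizes the augmented forward problem, then `g = x̂ - x*` is a
subgradient of the tailored loss `θ ↦ ℓ_θ(x̂)` at `θ`. -/
theorem subgradient_of_tailored_loss (p : ℕ) (hp : 0 < p)
    (X : Finset (Fin p → ℝ)) (hX : X.Nonempty)
    (hXbin : ∀ x ∈ X, ∀ i, x i = 0 ∨ x i = 1)
    (θ : Fin p → ℝ) (h : (Fin p → ℝ) → ℝ)
    (xh : Fin p → ℝ) (hxh : ∀ i, xh i = 0 ∨ xh i = 1)
    (xstar : Fin p → ℝ) (hxstarX : xstar ∈ X)
    (hxstar : ∀ y ∈ X,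
      (∑ i, (θ i + 2 * xh i - 1) * xstar i) + h xstar
        ≤ (∑ i, (θ i + 2 * xh i - 1) * y i) + h y) :
    ∀ θ' : Fin p → ℝ,
      (∑ i, θ' i * xh i) + h xh
        - X.inf' hX (fun x =>
            (∑ i, (θ' i + 2 * xh i - 1) * x i) + h x - ∑ i, 1 * xh i)
      ≥ ((∑ i, θ i * xh i) + h xh
          - X.inf' hX (fun x =>
              (∑ i, (θ i + 2 * xh i - 1) * x i) + h x - ∑ i, 1 * xh i))
        + ∑ i, (xh i - xstar i) * (θ' i - θ i) := by
  intro θ'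
  have hinfθ : X.inf' hX (fun x =>
        (∑ i, (θ i + 2 * xh i - 1) * x i) + h x - ∑ i, 1 * xh i)
      = (∑ i, (θ i + 2 * xh i - 1) * xstar i) + h xstar - ∑ i, 1 * xh i := by
    apply le_antisymm
    · exact Finset.inf'_le _ hxstarX
    · apply Finset.le_inf'
      intro y hy
      have := hxstar y hy
      linarith
  have hinfθ' : X.inf' hX (fun x =>
        (∑ i, (θ' i + 2 * xh i - 1) * x i) + h x - ∑ i, 1 * xh i)
      ≤ (∑ i, (θ' i + 2 * xh i - 1) * xstar i) + h xstar - ∑ i, 1 * xh i :=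
    Finset.inf'_le _ hxstarX
  have e : (∑ i, θ' i * xh i) - (∑ i, θ i * xh i)
        - ∑ i, (xh i - xstar i) * (θ' i - θ i)
      = (∑ i, (θ' i + 2 * xh i - 1) * xstar i)
        - ∑ i, (θ i + 2 * xh i - 1) * xstar i := by
    rw [← Finset.sum_sub_distrib, ← Finset.sum_sub_distrib,
      ← Finset.sum_sub_distrib]
    exact Finset.sum_congr rfl fun i _ => by ring
  rw [hinfθ]
  linarith
end
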